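/- arXiv:2207.08238 — 2 statements merged into one kernel-verified Lean document; each statement's English description precedes it below -/
import Mathlib

section
/- Assume that M is strongly homogeneous over A, i.e., for all finite tuples b, c in M with the same type over A there is an automorphism of M fixing A pointwise and sending b to c. Let μ ∈ 𝔐_x(M) and ν ∈ 𝔐_y(M) be global Keisler measures. If μ is A-invariant and μ ≥_{E,A} ν, then ν is A-invariant. -/
open FirstOrder

/-- A Keisler measure over the parameter set `A`, in the variables indexed by `α`:
a finitely additive probability measure on the Boolean algebra of `A`-definable
subsets of `M^α` (i.e. on `L_α(A)`).  The function `toFun` is defined on all sets,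
but only its values on `A`-definable sets are constrained (and relevant). -/
structure KeislerMeasure (L : FirstOrder.Language) (M : Type*) [L.Structure M]
    (A : Set M) (α : Type*) where
  toFun : Set (α → M) → ℝ
  measure_univ : toFun Set.univ = 1
  nonneg' : ∀ s : Set (α → M), A.Definable L s → 0 ≤ toFun s
  compl' : ∀ s : Set (α → M), A.Definable L s → toFun sᶜ = 1 - toFun s
  union_inter' : ∀ s t : Set (α → M), A.Definable L s → A.Definable L t →
    toFun (s ∪ t) = toFun s + toFun t - toFun (s ∩ t)

/-- Pull back a set of variable assignments along a variable reindexing map: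
for `S ⊆ M^α` and `f : α → β`, `cyl f S ⊆ M^β` is the corresponding cylinder.
E.g. `cyl Sum.inl X = X × M^β` inside `M^(α ⊕ β)`. -/
def cyl {M : Type*} {α β : Type*} (f : α → β) (S : Set (α → M)) : Set (β → M) :=
  {g : β → M | (fun a => g (f a)) ∈ S}

/-- The product `X × Y` of a set in variables `α` and a set in variables `β`,
viewed inside the variables `α ⊕ β`. -/
def prodSet {M : Type*} {α β : Type*} (X : Set (α → M)) (Y : Set (β → M)) :
    Set (α ⊕ β → M) :=
  cyl Sum.inl X ∩ cyl Sum.inr Y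

/-- The extension space `E(λ, μ)`: all global Keisler measures `ω` in the
variables `α ⊕ β` whose restriction to `A`-definable sets is `λ` and whose
marginal `π_α(ω)` is `μ`. -/
def extSpace (L : FirstOrder.Language) {M : Type*} [L.Structure M] (A : Set M)
    {α β : Type*} (lam : KeislerMeasure L M A (α ⊕ β))
    (mu : KeislerMeasure L M (Set.univ : Set M) α) :
    Set (KeislerMeasure L M (Set.univ : Set M) (α ⊕ β)) :=
  {om | (∀ s : Set (α ⊕ β → M), A.Definable L s → om.toFun s = lam.toFun s) ∧
    (∀ X : Set (α → M), (Set.univ : Set M).Definable L X →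
      om.toFun (cyl Sum.inl X) = mu.toFun X)}

/-- `μ` extension dominates `ν` over `A` (written `μ ≥_{E,A} ν`): there is
`λ ∈ 𝔐_{αβ}(A)` with `π_α(λ) = μ|_A` such that `π_β(ω) = ν` for every
`ω ∈ E(λ, μ)`. -/
def ExtDomOver (L : FirstOrder.Language) {M : Type*} [L.Structure M] (A : Set M)
    {α β : Type*} (mu : KeislerMeasure L M (Set.univ : Set M) α)
    (nu : KeislerMeasure L M (Set.univ : Set M) β) : Prop :=
  ∃ lam : KeislerMeasure L M A (α ⊕ β),
    (∀ X : Set (α → M), A.Definable L X →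
      lam.toFun (cyl Sum.inl X) = mu.toFun X) ∧
    ∀ om ∈ extSpace L A lam mu, ∀ Y : Set (β → M),
      (Set.univ : Set M).Definable L Y → om.toFun (cyl Sum.inr Y) = nu.toFun Y

/-- Tuples `b, c ∈ M^γ` have the same type over `A`: they belong to exactly the same
`A`-definable sets. -/
def SameTypeOver (L : FirstOrder.Language) {M : Type*} [L.Structure M] (A : Set M)
    {γ : Type*} (b c : γ → M) : Prop :=
  ∀ Z : Set (γ → M), A.Definable L Z → (b ∈ Z ↔ c ∈ Z)

/-- `M` is strongly homogeneous over `A`: any two finite tuples with the same type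
over `A` are conjugate by an automorphism of `M` fixing `A` pointwise. -/
def StronglyHomogeneousOver (L : FirstOrder.Language) (M : Type*) [L.Structure M]
    (A : Set M) : Prop :=
  ∀ (n : ℕ) (b c : Fin n → M), SameTypeOver L A b c →
    ∃ σ : M ≃[L] M, (∀ a ∈ A, σ a = a) ∧ ∀ i, σ (b i) = c i

/-- A global Keisler measure `μ ∈ 𝔐_α(M)` is `A`-invariant: for every `L`-formula
`φ(x; z)` and all tuples `b, c` with the same type over `A`,
`μ(φ(M^α; b)) = μ(φ(M^α; c))`. -/
def InvariantOver (L : FirstOrder.Language) {M : Type*} [L.Structure M] (A : Set M)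
    {α : Type*} (mu : KeislerMeasure L M (Set.univ : Set M) α) : Prop :=
  ∀ (n : ℕ) (φ : L.Formula (α ⊕ Fin n)) (b c : Fin n → M), SameTypeOver L A b c →
    mu.toFun {a : α → M | φ.Realize (Sum.elim a b)} =
      mu.toFun {a : α → M | φ.Realize (Sum.elim a c)}

/-!
Let `ω ∈ E(λ, μ)` and let `σ` be an automorphism over `A` with `σ b = c`. Since `σ` fixes every
`A`-definable set and `μ` is `A`-invariant, the pushforward `σ_* ω` lies in `E(λ, μ)` too, so
both have `y`-marginal `ν`, and `ν(φ(M^y; c)) = (σ_* ω)(φ(M^y; c)) = ω(φ(M^y; b)) = ν(φ(M^y; b))`.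

The substance is that `E(λ, μ)` is nonempty. By M. Riesz's extension theorem it suffices that
whenever `Σ sᵢ 1_{Dᵢ} + Σ tⱼ 1_{Xⱼ} ∘ π_x ≥ 0` pointwise (`Dᵢ` `A`-definable, `Xⱼ` definable),
also `Σ sᵢ λ(Dᵢ) + Σ tⱼ μ(Xⱼ) ≥ 0`. This follows by passing from the `λ`-part to its
fiberwise minimum over `x`, which is an `A`-definable simple function of `x` alone.
-/

open Set

section Charge

variable {W ι : Type*}

def boundedFunctions (W : Type*) : Submodule ℝ (W → ℝ) where
  carrier := {f | ∃ C, ∀ x, |f x| ≤ C}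
  add_mem' := by
    rintro f g ⟨Cf, hf⟩ ⟨Cg, hg⟩
    exact ⟨Cf + Cg, fun x => (abs_add_le _ _).trans (add_le_add (hf x) (hg x))⟩
  zero_mem' := ⟨0, fun x => by simp⟩
  smul_mem' := by
    rintro c f ⟨C, hf⟩
    exact ⟨|c| * C, fun x => by
      simpa [abs_mul] using mul_le_mul_of_nonneg_left (hf x) (abs_nonneg c)⟩

noncomputable def boundedIndicator (s : Set W) : boundedFunctions W :=
  ⟨s.indicator 1, 1, fun x => by by_cases hx : x ∈ s <;> simp [hx]⟩

theorem exists_positive_extension (S : ι → Set W) (w : ι → ℝ) (huniv : ∃ i, S i = univ)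
    (hcoh : ∀ (I : Finset ι) (c : ι → ℝ),
      (∀ x, 0 ≤ ∑ i ∈ I, c i * (S i).indicator 1 x) → 0 ≤ ∑ i ∈ I, c i * w i) :
    ∃ g : boundedFunctions W →ₗ[ℝ] ℝ,
      (∀ f : boundedFunctions W, 0 ≤ (f : W → ℝ) → 0 ≤ g f) ∧
        ∀ i, g (boundedIndicator (S i)) = w i := by
  let F : (ι →₀ ℝ) →ₗ[ℝ] boundedFunctions W :=
    Finsupp.linearCombination ℝ (fun i => boundedIndicator (S i))
  let Φ : (ι →₀ ℝ) →ₗ[ℝ] ℝ := Finsupp.linearCombination ℝ w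
  have hpos : ∀ c, 0 ≤ ((F c : boundedFunctions W) : W → ℝ) → 0 ≤ Φ c := by
    intro c hc
    have := hcoh c.support c (fun x => by
      simpa [F, Finsupp.linearCombination_apply, Finsupp.sum, boundedIndicator] using hc x)
    simpa [Φ, Finsupp.linearCombination_apply, Finsupp.sum, mul_comm] using this
  have hker : LinearMap.ker F ≤ LinearMap.ker Φ := by
    intro c hc
    have h0 : F c = 0 := hc
    refine le_antisymm ?_ (hpos c (by simp [h0]))
    have := hpos (-c) (by simp [h0])
    simpa using this
  let f : boundedFunctions W →ₗ.[ℝ] ℝ :=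
    ⟨LinearMap.range F, (LinearMap.ker F).liftQ Φ hker ∘ₗ F.quotKerEquivRange.symm.toLinearMap⟩
  have hf : ∀ c, f ⟨F c, LinearMap.mem_range_self F c⟩ = Φ c := by
    intro c
    simp [f, LinearMap.quotKerEquivRange_symm_apply_image]
  let cone : PointedCone ℝ (boundedFunctions W) :=
    (PointedCone.positive ℝ (W → ℝ)).comap (boundedFunctions W).subtype
  obtain ⟨i₀, hi₀⟩ := huniv
  obtain ⟨g, hgf, hg⟩ := riesz_extension cone f
    (by
      rintro ⟨_, c, rfl⟩ hc
      exact (hf c).symm ▸ hpos c hc)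
    (by
      rintro ⟨y, C, hC⟩
      refine ⟨⟨F (Finsupp.single i₀ C), LinearMap.mem_range_self F _⟩, fun x => ?_⟩
      have := neg_le_of_abs_le (hC x)
      simp [F, boundedIndicator, hi₀]
      linarith)
  refine ⟨g, fun f hf => hg f hf, fun i => ?_⟩
  have := hgf ⟨F (Finsupp.single i 1), LinearMap.mem_range_self F _⟩
  rw [hf] at this
  simpa [F, Φ] using this

theorem exists_finitelyAdditive_extension (S : ι → Set W) (w : ι → ℝ)
    (huniv : ∃ i, S i = univ ∧ w i = 1)
    (hcoh : ∀ (I : Finset ι) (c : ι → ℝ),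
      (∀ x, 0 ≤ ∑ i ∈ I, c i * (S i).indicator 1 x) → 0 ≤ ∑ i ∈ I, c i * w i) :
    ∃ m : Set W → ℝ, m univ = 1 ∧ (∀ s, 0 ≤ m s) ∧ (∀ s, m sᶜ = 1 - m s) ∧
      (∀ s t, m (s ∪ t) = m s + m t - m (s ∩ t)) ∧ ∀ i, m (S i) = w i := by
  obtain ⟨g, hpos, hg⟩ := exists_positive_extension S w (huniv.imp fun _ => And.left) hcoh
  have huniv' : g (boundedIndicator univ) = 1 := by
    obtain ⟨i, hi, hw⟩ := huniv
    rw [← hi, hg, hw]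
  refine ⟨fun s => g (boundedIndicator s), huniv', fun s => hpos _ fun x => ?_,
    fun s => ?_, fun s t => ?_, hg⟩
  · exact Set.indicator_nonneg (fun _ _ => zero_le_one) x
  · have : boundedIndicator sᶜ = boundedIndicator univ - boundedIndicator (W := W) s :=
      Subtype.ext (by simp [boundedIndicator, Set.indicator_compl])
    simp only [this, map_sub, huniv']
  · have : boundedIndicator (s ∪ t) =
        boundedIndicator s + boundedIndicator t - boundedIndicator (W := W) (s ∩ t) :=
      Subtype.ext (eq_sub_of_add_eq (Set.indicator_union_add_inter _ s t))
    simp only [this, map_sub, map_add]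

end Charge

namespace KeislerMeasure

variable {L : FirstOrder.Language} {M : Type*} [L.Structure M] {B : Set M} {γ : Type*}
  (κ : KeislerMeasure L M B γ)

theorem apply_empty : κ.toFun ∅ = 0 := by
  have := κ.compl' univ definable_univ
  rw [compl_univ, κ.measure_univ] at this
  linarith

theorem apply_inter_add_diff {s t : Set (γ → M)} (hs : B.Definable L s) (ht : B.Definable L t) :
    κ.toFun (s ∩ t) + κ.toFun (s \ t) = κ.toFun s := by
  have := κ.union_inter' _ _ (hs.inter ht) (hs.sdiff ht)
  rw [inter_union_sdiff, disjoint_sdiff_inter.symm.inter_eq, apply_empty] at this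
  linarith

/-- By induction on `I`: splitting `P` along `D j` absorbs `s j` into the constant `c`. -/
theorem add_sum_mul_inter_nonneg {ι : Type*} {D : ι → Set (γ → M)}
    (hD : ∀ i, B.Definable L (D i)) {s : ι → ℝ} {I : Finset ι} {c : ℝ} {P : Set (γ → M)}
    (hP : B.Definable L P) (h : ∀ x ∈ P, 0 ≤ c + ∑ i ∈ I, s i * (D i).indicator 1 x) :
    0 ≤ c * κ.toFun P + ∑ i ∈ I, s i * κ.toFun (D i ∩ P) := by
  classical
  induction I using Finset.induction_on generalizing c P with
  | empty =>
    rcases P.eq_empty_or_nonempty with rfl | ⟨x, hx⟩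
    · simp [apply_empty]
    · simpa using mul_nonneg (by simpa using h x hx) (κ.nonneg' P hP)
  | insert j I hj ih =>
    have hin := ih (c := c + s j) (hP.inter (hD j)) fun x hx => by
      have := h x hx.1
      rw [Finset.sum_insert hj, indicator_of_mem hx.2, Pi.one_apply, mul_one] at this
      linarith
    have hout := ih (c := c) (hP.sdiff (hD j)) fun x hx => by
      have := h x hx.1
      rw [Finset.sum_insert hj, indicator_of_notMem hx.2, mul_zero] at this
      linarith
    have hsum : ∑ i ∈ I, s i * κ.toFun (D i ∩ P) = ∑ i ∈ I, s i * κ.toFun (D i ∩ (P ∩ D j)) +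
        ∑ i ∈ I, s i * κ.toFun (D i ∩ (P \ D j)) := by
      rw [← Finset.sum_add_distrib]
      refine Finset.sum_congr rfl fun i _ => ?_
      rw [← mul_add, ← inter_assoc, ← inter_sdiff_assoc,
        κ.apply_inter_add_diff ((hD i).inter hP) (hD j)]
    rw [Finset.sum_insert hj, hsum, inter_comm (D j), ← κ.apply_inter_add_diff hP (hD j)]
    linarith

theorem sum_mul_le_sum_mul {ι ι' : Type*} {D : ι → Set (γ → M)} {E : ι' → Set (γ → M)}
    (hD : ∀ i, B.Definable L (D i)) (hE : ∀ j, B.Definable L (E j))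
    {I : Finset ι} {J : Finset ι'} {s : ι → ℝ} {t : ι' → ℝ}
    (h : ∀ x, ∑ i ∈ I, s i * (D i).indicator 1 x ≤ ∑ j ∈ J, t j * (E j).indicator 1 x) :
    ∑ i ∈ I, s i * κ.toFun (D i) ≤ ∑ j ∈ J, t j * κ.toFun (E j) := by
  have := κ.add_sum_mul_inter_nonneg (D := Sum.elim D E) (Sum.rec hD hE)
    (s := Sum.elim (-s) t) (I := I.disjSum J) (c := 0) definable_univ fun x _ => by
      simpa [Finset.sum_neg_distrib] using h x
  simpa [Finset.sum_neg_distrib] using this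

end KeislerMeasure

namespace Set

open FirstOrder.Language

variable {L : FirstOrder.Language} {M : Type*} [L.Structure M] {A : Set M} {α β : Type*}

/-- A formula has only finitely many free variables, so the projection reduces to
`Definable.exists_of_finite`. -/
theorem Definable.exists_of_nonempty [Nonempty M] {S : Set (α ⊕ β → M)} (hS : A.Definable L S) :
    A.Definable L {v : α → M | ∃ u : β → M, Sum.elim v u ∈ S} := by
  classical
  obtain ⟨φ, rfl⟩ := hS
  let r : φ.freeVarFinset → α ⊕ φ.freeVarFinset.toRight
    | ⟨Sum.inl a, _⟩ => Sum.inl a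
    | ⟨Sum.inr b, hb⟩ => Sum.inr ⟨b, Finset.mem_toRight.2 hb⟩
  have hr : ∀ (v : α → M) (u₀ : φ.freeVarFinset.toRight → M) (u : β → M),
      (∀ b, u₀ b = u b) →
        (Formula.Realize (φ.restrictFreeVar r) (Sum.elim v u₀) ↔ φ.Realize (Sum.elim v u)) := by
    intro v u₀ u hu
    refine BoundedFormula.realize_restrictFreeVar _ ?_
    rintro ⟨a | b, hx⟩
    · rfl
    · exact hu _
  convert Definable.exists_of_finite (β := φ.freeVarFinset.toRight)
    ⟨φ.restrictFreeVar r, rfl⟩ using 1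
  ext v
  constructor
  · rintro ⟨u, hu⟩
    exact ⟨fun b => u b, (hr v _ u fun _ => rfl).2 hu⟩
  · rintro ⟨u₀, hu₀⟩
    refine ⟨fun b => if hb : b ∈ φ.freeVarFinset.toRight then u₀ ⟨b, hb⟩
      else Classical.arbitrary M, (hr v u₀ _ fun b => ?_).1 hu₀⟩
    simp

theorem definable_preimage_sum_mul_indicator {ι : Type*} {D : ι → Set (α → M)}
    (hD : ∀ i, A.Definable L (D i)) (s : ι → ℝ) (I : Finset ι) (V : Set ℝ) :
    A.Definable L ((fun x => ∑ i ∈ I, s i * (D i).indicator 1 x) ⁻¹' V) := by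
  classical
  induction I using Finset.induction_on generalizing V with
  | empty =>
    by_cases h0 : (0 : ℝ) ∈ V <;> simp [h0]
  | insert j I hj ih =>
    have : (fun x => ∑ i ∈ insert j I, s i * (D i).indicator 1 x) ⁻¹' V =
        D j ∩ (fun x => ∑ i ∈ I, s i * (D i).indicator 1 x) ⁻¹' ((s j + ·) ⁻¹' V) ∪
          (D j)ᶜ ∩ (fun x => ∑ i ∈ I, s i * (D i).indicator 1 x) ⁻¹' V := by
      ext x
      by_cases hx : x ∈ D j <;> simp [Finset.sum_insert hj, hx]
    rw [this]
    exact ((hD j).inter (ih _)).union ((hD j).compl.inter (ih V))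

end Set

theorem finite_range_sum_mul_indicator {W ι : Type*} (D : ι → Set W) (s : ι → ℝ)
    (I : Finset ι) : (range fun x => ∑ i ∈ I, s i * (D i).indicator 1 x).Finite := by
  classical
  refine (I.powerset.finite_toSet.image fun J => ∑ i ∈ J, s i).subset ?_
  rintro _ ⟨x, rfl⟩
  refine ⟨I.filter (x ∈ D ·), Finset.mem_powerset.2 (Finset.filter_subset _ _), ?_⟩
  simp [Finset.sum_filter, Set.indicator_apply]

section FiberMin

open FirstOrder.Language

variable {L : FirstOrder.Language} {M : Type*} [L.Structure M] {A : Set M} {α β : Type*}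

theorem exists_isLeast_fiber [Nonempty M] {φ : (α ⊕ β → M) → ℝ} (hfin : (range φ).Finite)
    (hdef : ∀ V : Set ℝ, A.Definable L (φ ⁻¹' V)) :
    ∃ (R : Finset ℝ) (C : ℝ → Set (α → M)), (∀ r, A.Definable L (C r)) ∧
      ∀ a, IsLeast (range fun u => φ (Sum.elim a u)) (∑ r ∈ R, r * (C r).indicator 1 a) := by
  classical
  refine ⟨hfin.toFinset, fun r => {a | IsLeast (range fun u => φ (Sum.elim a u)) r},
    fun r => ?_, fun a => ?_⟩
  · have : {a | IsLeast (range fun u => φ (Sum.elim a u)) r} =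
        {a | ∃ u, Sum.elim a u ∈ φ ⁻¹' {r}} \ {a | ∃ u, Sum.elim a u ∈ φ ⁻¹' Iio r} := by
      ext a
      simp [IsLeast, lowerBounds]
    simp only [this]
    exact (hdef _).exists_of_nonempty.sdiff (hdef _).exists_of_nonempty
  · have hfib : (range fun u => φ (Sum.elim a u)).Finite :=
      hfin.subset (range_comp_subset_range _ φ)
    obtain ⟨m, hm⟩ : ∃ m, IsLeast (range fun u => φ (Sum.elim a u)) m :=
      ⟨_, (range_nonempty _).csInf_mem hfib, fun _ hb => csInf_le hfib.bddBelow hb⟩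
    obtain ⟨u, hu⟩ := hm.1
    rw [Finset.sum_eq_single_of_mem m (hfin.mem_toFinset.2 ⟨_, hu⟩) fun r _ hr => ?_]
    · simp [hm]
    · simp [show ¬IsLeast _ r from fun h => hr (h.unique hm)]

end FiberMin

section Extension

variable {L : FirstOrder.Language} {M : Type*} [L.Structure M] {A : Set M} {α β : Type*}

/-- With `m` the fiberwise minimum of the `λ`-part `φ`: `∫ φ dλ ≥ ∫ m dμ` because `m ∘ π ≤ φ`,
and `∫ m dμ + ∫ ψ dμ ≥ 0` because `m + ψ ≥ 0`. -/
theorem sum_mul_add_sum_mul_nonneg [Nonempty M] {lam : KeislerMeasure L M A (α ⊕ β)}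
    {mu : KeislerMeasure L M univ α}
    (hmarg : ∀ X, A.Definable L X → lam.toFun (cyl Sum.inl X) = mu.toFun X)
    {ι κ : Type*} {D : ι → Set (α ⊕ β → M)} {X : κ → Set (α → M)}
    (hD : ∀ i, A.Definable L (D i)) (hX : ∀ j, (univ : Set M).Definable L (X j))
    {I : Finset ι} {J : Finset κ} {s : ι → ℝ} {t : κ → ℝ}
    (h : ∀ a u, 0 ≤ ∑ i ∈ I, s i * (D i).indicator 1 (Sum.elim a u) +
      ∑ j ∈ J, t j * (X j).indicator 1 a) :
    0 ≤ ∑ i ∈ I, s i * lam.toFun (D i) + ∑ j ∈ J, t j * mu.toFun (X j) := by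
  obtain ⟨R, C, hC, hmin⟩ := exists_isLeast_fiber (finite_range_sum_mul_indicator D s I)
    (definable_preimage_sum_mul_indicator hD s I)
  have hlam : ∑ r ∈ R, r * lam.toFun (cyl Sum.inl (C r)) ≤ ∑ i ∈ I, s i * lam.toFun (D i) :=
    lam.sum_mul_le_sum_mul (fun r => (hC r).preimage_comp _) hD fun x => by
      obtain ⟨a, u, rfl⟩ : ∃ a u, x = Sum.elim a u := ⟨_, _, (Sum.elim_comp_inl_inr x).symm⟩
      exact (hmin a).2 ⟨u, rfl⟩
  have hmu : ∑ j ∈ J, -t j * mu.toFun (X j) ≤ ∑ r ∈ R, r * mu.toFun (C r) :=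
    mu.sum_mul_le_sum_mul hX (fun r => (hC r).mono (subset_univ A)) fun a => by
      obtain ⟨u, hu⟩ := (hmin a).1
      have := h a u
      simp only [neg_mul, Finset.sum_neg_distrib]
      linarith
  simp only [hmarg _ (hC _)] at hlam
  simp only [neg_mul, Finset.sum_neg_distrib] at hmu
  linarith

theorem exists_mem_extSpace [Nonempty M] (lam : KeislerMeasure L M A (α ⊕ β))
    (mu : KeislerMeasure L M univ α)
    (hmarg : ∀ X, A.Definable L X → lam.toFun (cyl Sum.inl X) = mu.toFun X) :
    (extSpace L A lam mu).Nonempty := by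
  let S : {D : Set (α ⊕ β → M) // A.Definable L D} ⊕
      {X : Set (α → M) // (univ : Set M).Definable L X} → Set (α ⊕ β → M) :=
    Sum.elim Subtype.val fun X => cyl Sum.inl X.1
  let w : {D : Set (α ⊕ β → M) // A.Definable L D} ⊕
      {X : Set (α → M) // (univ : Set M).Definable L X} → ℝ :=
    Sum.elim (fun D => lam.toFun D.1) fun X => mu.toFun X.1
  obtain ⟨m, huniv, hnonneg, hcompl, hunion, hS⟩ := exists_finitelyAdditive_extension S w
    ⟨Sum.inl ⟨univ, definable_univ⟩, rfl, lam.measure_univ⟩ fun I c hc => by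
      simp only [Finset.sum_sum_eq_sum_toLeft_add_sum_toRight] at hc ⊢
      exact sum_mul_add_sum_mul_nonneg hmarg (fun D => D.2) (fun X => X.2)
        fun a u => hc (Sum.elim a u)
  exact ⟨⟨m, huniv, fun s _ => hnonneg s, fun s _ => hcompl s, fun s t _ _ => hunion s t⟩,
    fun s hs => hS (Sum.inl ⟨s, hs⟩), fun X hX => hS (Sum.inr ⟨X, hX⟩)⟩

end Extension

section Automorphism

open FirstOrder.Language

variable {L : FirstOrder.Language} {M : Type*} [L.Structure M] {A : Set M} {γ : Type*}

theorem Set.Definable.comp_mem_iff {σ : M ≃[L] M} (hσ : ∀ a ∈ A, σ a = a) {Z : Set (γ → M)}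
    (hZ : A.Definable L Z) (v : γ → M) : σ ∘ v ∈ Z ↔ v ∈ Z := by
  obtain ⟨φ, rfl⟩ := definable_iff_exists_formula_sum.1 hZ
  have : Sum.elim ((↑) : A → M) (σ ∘ v) = σ ∘ Sum.elim (↑) v := by
    funext z
    rcases z with a | x
    · exact (hσ a a.2).symm
    · rfl
  simp only [mem_ofPred_eq, this, StrongHomClass.realize_formula]

theorem Set.univ_definable_iff_exists_formula_fin {X : Set (γ → M)} :
    (univ : Set M).Definable L X ↔ ∃ (n : ℕ) (ψ : L.Formula (γ ⊕ Fin n)) (d : Fin n → M),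
      X = {v | ψ.Realize (Sum.elim v d)} := by
  classical
  constructor
  · intro h
    obtain ⟨A₀, -, h₀⟩ := definable_iff_finitely_definable.1 h
    obtain ⟨φ, rfl⟩ := definable_iff_exists_formula_sum.1 h₀
    let e := Fintype.equivFin (A₀ : Set M)
    refine ⟨_, φ.relabel (Sum.elim (fun a => Sum.inr (e a)) Sum.inl), fun i => e.symm i, ?_⟩
    ext v
    simp only [mem_ofPred_eq, Formula.realize_relabel]
    congr!
    funext z
    rcases z with a | x <;> simp
  · rintro ⟨n, ψ, d, rfl⟩
    refine definable_iff_exists_formula_sum.2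
      ⟨ψ.relabel (Sum.elim Sum.inr fun i => Sum.inl ⟨d i, mem_univ _⟩), ?_⟩
    ext v
    simp only [mem_ofPred_eq, Formula.realize_relabel]
    congr!
    funext z
    rcases z with x | i <;> rfl

theorem preimage_comp_setOf_realize (σ : M ≃[L] M) {n : ℕ} (ψ : L.Formula (γ ⊕ Fin n))
    (d : Fin n → M) : (σ ∘ ·) ⁻¹' {v : γ → M | ψ.Realize (Sum.elim v d)} =
      {v | ψ.Realize (Sum.elim v (σ.symm ∘ d))} := by
  ext v
  have : Sum.elim (σ ∘ v) d = σ ∘ Sum.elim v (σ.symm ∘ d) := by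
    funext z
    rcases z with x | i
    · rfl
    · exact (σ.apply_symm_apply (d i)).symm
  simp only [mem_preimage, mem_ofPred_eq, this, StrongHomClass.realize_formula]

theorem Set.Definable.preimage_equiv_comp (σ : M ≃[L] M) {X : Set (γ → M)}
    (hX : (univ : Set M).Definable L X) : (univ : Set M).Definable L ((σ ∘ ·) ⁻¹' X) := by
  obtain ⟨n, ψ, d, rfl⟩ := univ_definable_iff_exists_formula_fin.1 hX
  rw [preimage_comp_setOf_realize]
  exact univ_definable_iff_exists_formula_fin.2 ⟨n, ψ, _, rfl⟩

theorem InvariantOver.apply_preimage_equiv_comp {mu : KeislerMeasure L M univ γ}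
    (hinv : InvariantOver L A mu) {σ : M ≃[L] M} (hσ : ∀ a ∈ A, σ a = a) {X : Set (γ → M)}
    (hX : (univ : Set M).Definable L X) : mu.toFun ((σ ∘ ·) ⁻¹' X) = mu.toFun X := by
  obtain ⟨n, ψ, d, rfl⟩ := univ_definable_iff_exists_formula_fin.1 hX
  have hσ' : ∀ a ∈ A, σ.symm a = a := fun a ha => by
    simpa using (congrArg σ.symm (hσ a ha)).symm
  rw [preimage_comp_setOf_realize]
  exact (hinv n ψ d _ fun Z hZ => (hZ.comp_mem_iff hσ' d).symm).symm

def KeislerMeasure.map (σ : M ≃[L] M) (ω : KeislerMeasure L M univ γ) :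
    KeislerMeasure L M univ γ where
  toFun S := ω.toFun ((σ ∘ ·) ⁻¹' S)
  measure_univ := ω.measure_univ
  nonneg' _ hS := ω.nonneg' _ (hS.preimage_equiv_comp σ)
  compl' _ hS := ω.compl' _ (hS.preimage_equiv_comp σ)
  union_inter' _ _ hS hT :=
    ω.union_inter' _ _ (hS.preimage_equiv_comp σ) (hT.preimage_equiv_comp σ)

theorem KeislerMeasure.map_mem_extSpace {α β : Type*} {lam : KeislerMeasure L M A (α ⊕ β)}
    {mu : KeislerMeasure L M univ α} (hinv : InvariantOver L A mu) {σ : M ≃[L] M}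
    (hσ : ∀ a ∈ A, σ a = a) {ω : KeislerMeasure L M univ (α ⊕ β)}
    (hω : ω ∈ extSpace L A lam mu) : ω.map σ ∈ extSpace L A lam mu := by
  refine ⟨fun s hs => ?_, fun X hX => ?_⟩
  · change ω.toFun ((σ ∘ ·) ⁻¹' s) = _
    rw [show (σ ∘ ·) ⁻¹' s = s from ext (hs.comp_mem_iff hσ), hω.1 s hs]
  · change ω.toFun (cyl Sum.inl ((σ ∘ ·) ⁻¹' X)) = _
    rw [hω.2 _ (hX.preimage_equiv_comp σ), hinv.apply_preimage_equiv_comp hσ hX]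

end Automorphism

/-- If `M` is strongly homogeneous over `A`, `μ` is `A`-invariant and `μ ≥_{E,A} ν`,
then `ν` is `A`-invariant. -/
theorem invariant_of_extDom {L : FirstOrder.Language} {M : Type*} [L.Structure M]
    (A : Set M) {α β : Type*}
    (hhom : StronglyHomogeneousOver L M A)
    (mu : KeislerMeasure L M (Set.univ : Set M) α)
    (nu : KeislerMeasure L M (Set.univ : Set M) β)
    (hinv : InvariantOver L A mu)
    (hdom : ExtDomOver L A mu nu) :
    InvariantOver L A nu := by
  intro n φ b c hbc
  rcases isEmpty_or_nonempty M with hM | hM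
  · rw [Subsingleton.elim b c]
  obtain ⟨lam, hmarg, hext⟩ := hdom
  obtain ⟨ω, hω⟩ := exists_mem_extSpace lam mu hmarg
  obtain ⟨σ, hσA, hσbc⟩ := hhom n b c hbc
  have hσ : (σ ∘ ·) ⁻¹' {y : β → M | φ.Realize (Sum.elim y c)} =
      {y | φ.Realize (Sum.elim y b)} := by
    have hb : σ.symm ∘ c = b := funext fun i => by
      rw [Function.comp_apply, ← hσbc i, σ.symm_apply_apply]
    rw [preimage_comp_setOf_realize, hb]
  have hY : ∀ d : Fin n → M, (univ : Set M).Definable L {y : β → M | φ.Realize (Sum.elim y d)} :=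
    fun d => univ_definable_iff_exists_formula_fin.2 ⟨n, φ, d, rfl⟩
  rw [← hext ω hω _ (hY b), ← hext _ (KeislerMeasure.map_mem_extSpace hinv hσA hω) _ (hY c)]
  change _ = ω.toFun (cyl Sum.inr ((σ ∘ ·) ⁻¹' _))
  rw [hσ]
end

section
/- Let A ⊆ M, let μ ∈ 𝔐_x(M) be a global Keisler measure, and let ν₁, ν₂ ∈ 𝔐_y(M) be global Keisler measures with supp(ν₁) ∩ supp(ν₂) = ∅. If μ ▶_A ν₁ and μ ▶_A ν₂, then there exists a finite tuple b from M such that for all r, s ∈ [0,1] with r + s = 1, μ ▶_{A∪b} (rν₁ + sν₂). -/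
open FirstOrder

/-- A complete type over `A` in the variables `α`: an ultrafilter on the
Boolean algebra of `A`-definable subsets of `M^α`. -/
structure CompleteType (L : FirstOrder.Language) (M : Type*) [L.Structure M]
    (A : Set M) (α : Type*) where
  sets : Set (Set (α → M))
  definable_of_mem : ∀ s ∈ sets, A.Definable L s
  univ_mem : Set.univ ∈ sets
  empty_not_mem : ∅ ∉ sets
  inter_mem : ∀ s ∈ sets, ∀ t ∈ sets, s ∩ t ∈ sets
  superset_mem : ∀ s ∈ sets, ∀ t : Set (α → M), A.Definable L t → s ⊆ t → t ∈ sets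
  mem_or_compl_mem : ∀ s : Set (α → M), A.Definable L s → s ∈ sets ∨ sᶜ ∈ sets

/-- `ω ∈ 𝔐_{αβ}(A)` is a separated amalgam: `ω(X × Y) = π_α(ω)(X) · π_β(ω)(Y)` for
all `A`-definable rectangles. -/
def SepAmalgam (L : FirstOrder.Language) {M : Type*} [L.Structure M] (A : Set M)
    {α β : Type*} (om : KeislerMeasure L M A (α ⊕ β)) : Prop :=
  ∀ (X : Set (α → M)) (Y : Set (β → M)), A.Definable L X → A.Definable L Y →
    om.toFun (prodSet X Y) = om.toFun (cyl Sum.inl X) * om.toFun (cyl Sum.inr Y)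

/-- The amalgam space `Amal(λ,μ)`: all separated amalgams in `E(λ,μ)`. -/
def amalSpace (L : FirstOrder.Language) {M : Type*} [L.Structure M] (A : Set M)
    {α β : Type*} (lam : KeislerMeasure L M A (α ⊕ β))
    (mu : KeislerMeasure L M (Set.univ : Set M) α) :
    Set (KeislerMeasure L M (Set.univ : Set M) (α ⊕ β)) :=
  {om ∈ extSpace L A lam mu | SepAmalgam L (Set.univ : Set M) om}

/-- `μ` amalgam deciphers `ν` over `A` (`μ ▶_A ν`): there is `λ ∈ 𝔐_{αβ}(A)` with
`π_α(λ) = μ|_A`, `Amal(λ,μ) ≠ ∅`, and `π_β(ω) = ν` for every `ω ∈ Amal(λ,μ)`. -/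
def AmalDecipherOver (L : FirstOrder.Language) {M : Type*} [L.Structure M] (A : Set M)
    {α β : Type*} (mu : KeislerMeasure L M (Set.univ : Set M) α)
    (nu : KeislerMeasure L M (Set.univ : Set M) β) : Prop :=
  ∃ lam : KeislerMeasure L M A (α ⊕ β),
    (∀ X : Set (α → M), A.Definable L X →
      lam.toFun (cyl Sum.inl X) = mu.toFun X) ∧
    (amalSpace L A lam mu).Nonempty ∧
    ∀ om ∈ amalSpace L A lam mu, ∀ Y : Set (β → M),
      (Set.univ : Set M).Definable L Y → om.toFun (cyl Sum.inr Y) = nu.toFun Y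

/-- The global complete type `p` is in the support of `ν ∈ 𝔐_β(M)`: every set in `p`
has positive `ν`-measure. -/
def InSupport (L : FirstOrder.Language) {M : Type*} [L.Structure M] {β : Type*}
    (p : CompleteType L M (Set.univ : Set M) β)
    (nu : KeislerMeasure L M (Set.univ : Set M) β) : Prop :=
  ∀ Y ∈ p.sets, 0 < nu.toFun Y

/-!
The prime ideal theorem, applied to the ideal of definable sets covered by a `ν₁`-null set and a
`ν₂`-null set, turns the disjointness of the supports into a definable `D` with `ν₁(D) = 1` and
`ν₂(D) = 0`; `D` is definable over a finite tuple `b`. For `ωᵢ ∈ Amal(λᵢ, μ)` the mixture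
`ω = r ω₁ + s ω₂` is again a separated amalgam, and `λ = ω|_{A ∪ b}` witnesses the claim: any
`ω' ∈ Amal(λ, μ)` agrees with `ω` on the `(A ∪ b)`-definable sets `S ∩ (M^x × D)`, so `ω'`
conditioned on `M^x × D` (resp. `M^x × Dᶜ`) lies in `Amal(λ₁, μ)` (resp. `Amal(λ₂, μ)`), which
forces its `y`-marginal to be `r ν₁ + s ν₂`.
-/

open Set

section

variable {L : FirstOrder.Language} {M : Type*} [L.Structure M]

namespace KeislerMeasure

variable {B : Set M} {γ : Type*} (m : KeislerMeasure L M B γ) {s t : Set (γ → M)}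

lemma toFun_empty : m.toFun (∅ : Set (γ → M)) = 0 := by
  have h := m.compl' univ definable_univ
  rw [compl_univ, m.measure_univ] at h
  linarith

lemma toFun_inter_add_compl_inter (hs : B.Definable L s) (ht : B.Definable L t) :
    m.toFun (s ∩ t) + m.toFun (sᶜ ∩ t) = m.toFun t := by
  have h := m.union_inter' (s ∩ t) (sᶜ ∩ t) (hs.inter ht) (hs.compl.inter ht)
  rw [← union_inter_distrib_right, union_compl_self, univ_inter, inter_inter_inter_comm,
    inter_compl_self, empty_inter, m.toFun_empty] at h
  linarith

lemma toFun_mono (hs : B.Definable L s) (ht : B.Definable L t) (hst : s ⊆ t) :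
    m.toFun s ≤ m.toFun t := by
  have h := m.toFun_inter_add_compl_inter hs ht
  rw [inter_eq_left.mpr hst] at h
  linarith [m.nonneg' (sᶜ ∩ t) (hs.compl.inter ht)]

lemma toFun_inter_of_toFun_eq_zero (hs : B.Definable L s) (ht : B.Definable L t)
    (h : m.toFun t = 0) : m.toFun (s ∩ t) = 0 :=
  le_antisymm (h ▸ m.toFun_mono (hs.inter ht) ht inter_subset_right)
    (m.nonneg' _ (hs.inter ht))

lemma toFun_inter_of_toFun_eq_one (hs : B.Definable L s) (ht : B.Definable L t)
    (h : m.toFun t = 1) : m.toFun (s ∩ t) = m.toFun s := by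
  have hc : m.toFun tᶜ = 0 := by rw [m.compl' t ht, h, sub_self]
  have := m.toFun_inter_add_compl_inter ht hs
  rw [inter_comm t, inter_comm tᶜ, m.toFun_inter_of_toFun_eq_zero hs ht.compl hc] at this
  linarith

lemma toFun_union_of_toFun_eq_zero (hs : B.Definable L s) (ht : B.Definable L t)
    (h₁ : m.toFun s = 0) (h₂ : m.toFun t = 0) : m.toFun (s ∪ t) = 0 := by
  rw [m.union_inter' s t hs ht, m.toFun_inter_of_toFun_eq_zero hs ht h₂, h₁, h₂]
  ring

noncomputable def comb (r s : ℝ) (hr : 0 ≤ r) (hs : 0 ≤ s) (hrs : r + s = 1)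
    (m₁ m₂ : KeislerMeasure L M B γ) : KeislerMeasure L M B γ where
  toFun S := r * m₁.toFun S + s * m₂.toFun S
  measure_univ := by rw [m₁.measure_univ, m₂.measure_univ, mul_one, mul_one, hrs]
  nonneg' S hS := by
    have := m₁.nonneg' S hS
    have := m₂.nonneg' S hS
    positivity
  compl' S hS := by
    rw [m₁.compl' S hS, m₂.compl' S hS]
    linear_combination hrs
  union_inter' S T hS hT := by
    rw [m₁.union_inter' S T hS hT, m₂.union_inter' S T hS hT]
    ring

noncomputable def restrict {B' : Set M} (hB : B' ⊆ B) : KeislerMeasure L M B' γ where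
  toFun := m.toFun
  measure_univ := m.measure_univ
  nonneg' S hS := m.nonneg' S (hS.mono hB)
  compl' S hS := m.compl' S (hS.mono hB)
  union_inter' S T hS hT := m.union_inter' S T (hS.mono hB) (hT.mono hB)

noncomputable def cond (C : Set (γ → M)) (hC : B.Definable L C) (hpos : 0 < m.toFun C) :
    KeislerMeasure L M B γ where
  toFun S := m.toFun (S ∩ C) / m.toFun C
  measure_univ := by rw [univ_inter, div_self hpos.ne']
  nonneg' S hS := div_nonneg (m.nonneg' _ (hS.inter hC)) hpos.le
  compl' S hS := by
    rw [eq_sub_iff_add_eq, ← add_div, add_comm, m.toFun_inter_add_compl_inter hS hC,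
      div_self hpos.ne']
  union_inter' S T hS hT := by
    rw [union_inter_distrib_right, m.union_inter' _ _ (hS.inter hC) (hT.inter hC),
      ← inter_inter_distrib_right]
    ring

def nullIdeal : Order.Ideal (L.DefinableSet B γ) where
  carrier := {Y | m.toFun Y = 0}
  lower' Y Z hZY hY :=
    le_antisymm (hY ▸ m.toFun_mono Z.2 Y.2 hZY) (m.nonneg' _ Z.2)
  nonempty' := ⟨⊥, m.toFun_empty⟩
  directed' Y hY Z hZ :=
    ⟨Y ⊔ Z, m.toFun_union_of_toFun_eq_zero Y.2 Z.2 hY hZ, le_sup_left, le_sup_right⟩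

lemma mem_nullIdeal {Y : L.DefinableSet B γ} : Y ∈ m.nullIdeal ↔ m.toFun Y = 0 := Iff.rfl

end KeislerMeasure

namespace CompleteType

variable {A : Set M} {α : Type*}

def ofIsPrime (J : Order.Ideal (L.DefinableSet A α)) (hJ : J.IsPrime) :
    CompleteType L M A α where
  sets := {s | ∃ hs : A.Definable L s, (⟨s, hs⟩ : L.DefinableSet A α) ∉ J}
  definable_of_mem _ h := h.1
  univ_mem := ⟨definable_univ, hJ.top_notMem⟩
  empty_not_mem := fun ⟨_, h⟩ => h J.bot_mem
  inter_mem _ := fun ⟨hs, hsJ⟩ _ ⟨ht, htJ⟩ =>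
    ⟨hs.inter ht, fun h => (hJ.mem_or_mem h).elim hsJ htJ⟩
  superset_mem _ := fun ⟨_, hsJ⟩ _ ht hst => ⟨ht, fun h => hsJ (J.lower hst h)⟩
  mem_or_compl_mem s hs :=
    (hJ.notMem_or_compl_notMem (x := ⟨s, hs⟩)).imp (⟨hs, ·⟩) (⟨hs.compl, ·⟩)

lemma inSupport_ofIsPrime {J : Order.Ideal (L.DefinableSet (univ : Set M) α)} (hJ : J.IsPrime)
    {nu : KeislerMeasure L M (univ : Set M) α} (hnu : nu.nullIdeal ≤ J) :
    InSupport L (ofIsPrime J hJ) nu :=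
  fun _ ⟨hY, hYJ⟩ => (nu.nonneg' _ hY).lt_of_ne fun h => hYJ (hnu h.symm)

end CompleteType

theorem exists_definable_separating {β : Type*} {nu₁ nu₂ : KeislerMeasure L M (univ : Set M) β}
    (h : ¬ ∃ p : CompleteType L M (univ : Set M) β, InSupport L p nu₁ ∧ InSupport L p nu₂) :
    ∃ D : Set (β → M), (univ : Set M).Definable L D ∧ nu₁.toFun D = 1 ∧ nu₂.toFun D = 0 := by
  by_contra! hD
  have htop : (⊤ : L.DefinableSet univ β) ∉ nu₁.nullIdeal ⊔ nu₂.nullIdeal := by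
    rintro ⟨Y₁, hY₁, Y₂, hY₂, hle⟩
    have hsub : Y₁ᶜ ≤ Y₂ := codisjoint_iff_compl_le_right.mp (codisjoint_iff_le_sup.mpr hle)
    have hY₁c : univ.Definable L (Y₁ : Set (β → M))ᶜ := Y₁.2.compl
    refine hD _ hY₁c ?_ ?_
    · rw [nu₁.compl' (Y₁ : Set (β → M)) Y₁.2, nu₁.mem_nullIdeal.mp hY₁, sub_zero]
    · exact le_antisymm (nu₂.mem_nullIdeal.mp hY₂ ▸ nu₂.toFun_mono hY₁c Y₂.2 hsub)
        (nu₂.nonneg' _ hY₁c)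
  obtain ⟨J, hJ, hIJ, -⟩ := DistribLattice.prime_ideal_of_disjoint_filter_ideal
    (F := Order.PFilter.principal ⊤) (I := nu₁.nullIdeal ⊔ nu₂.nullIdeal)
    (disjoint_left.mpr fun Y hY hYI =>
      htop (top_le_iff.mp (Order.PFilter.mem_principal.mp hY) ▸ hYI))
  exact h ⟨_, CompleteType.inSupport_ofIsPrime hJ (le_sup_left.trans hIJ),
    CompleteType.inSupport_ofIsPrime hJ (le_sup_right.trans hIJ)⟩

lemma Set.Definable.exists_fin_range {A : Set M} {α : Type*} {s : Set (α → M)}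
    (h : A.Definable L s) : ∃ (n : ℕ) (b : Fin n → M), (range b).Definable L s := by
  obtain ⟨A0, -, hA0⟩ := definable_iff_finitely_definable.mp h
  obtain ⟨n, b, hb⟩ := A0.finite_toSet.fin_embedding
  exact ⟨n, b, hb ▸ hA0⟩

lemma definable_cyl {A : Set M} {α β : Type*} (f : α → β) {S : Set (α → M)}
    (h : A.Definable L S) : A.Definable L (cyl f S) :=
  h.preimage_comp f

section Amalgam

variable {α β : Type*}

lemma SepAmalgam.comb {B : Set M} {ω₁ ω₂ : KeislerMeasure L M B (α ⊕ β)}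
    (h₁ : SepAmalgam L B ω₁) (h₂ : SepAmalgam L B ω₂)
    (hmarg : ∀ X, B.Definable L X → ω₁.toFun (cyl Sum.inl X) = ω₂.toFun (cyl Sum.inl X))
    {r s : ℝ} (hr : 0 ≤ r) (hs : 0 ≤ s) (hrs : r + s = 1) :
    SepAmalgam L B (ω₁.comb r s hr hs hrs ω₂) := by
  intro X Y hX hY
  change r * ω₁.toFun (prodSet X Y) + s * ω₂.toFun (prodSet X Y) =
    (r * ω₁.toFun (cyl Sum.inl X) + s * ω₂.toFun (cyl Sum.inl X)) *
      (r * ω₁.toFun (cyl Sum.inr Y) + s * ω₂.toFun (cyl Sum.inr Y))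
  rw [h₁ X Y hX hY, h₂ X Y hX hY, hmarg X hX]
  linear_combination -(ω₂.toFun (cyl Sum.inl X) *
    (r * ω₁.toFun (cyl Sum.inr Y) + s * ω₂.toFun (cyl Sum.inr Y))) * hrs

lemma KeislerMeasure.toFun_inter_eq_mul_of_eq_comb {B : Set M} {γ : Type*}
    {ω ω₁ ω₂ : KeislerMeasure L M (univ : Set M) γ} {r s : ℝ}
    (hω : ∀ S, B.Definable L S → ω.toFun S = r * ω₁.toFun S + s * ω₂.toFun S)
    {C : Set (γ → M)} (hC : B.Definable L C) (h₁ : ω₁.toFun C = 1) (h₂ : ω₂.toFun C = 0)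
    {S : Set (γ → M)} (hS : B.Definable L S) : ω.toFun (S ∩ C) = r * ω₁.toFun S := by
  have hSu := hS.mono (subset_univ B)
  have hCu := hC.mono (subset_univ B)
  rw [hω _ (hS.inter hC), ω₁.toFun_inter_of_toFun_eq_one hSu hCu h₁,
    ω₂.toFun_inter_of_toFun_eq_zero hSu hCu h₂, mul_zero, add_zero]

variable {A : Set M} {mu : KeislerMeasure L M (univ : Set M) α}
  {lam : KeislerMeasure L M A (α ⊕ β)} {ω : KeislerMeasure L M (univ : Set M) (α ⊕ β)}
  {D : Set (β → M)}

lemma cond_cylinr_mem_amalSpace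
    (hmarg : ∀ X, (univ : Set M).Definable L X → ω.toFun (cyl Sum.inl X) = mu.toFun X)
    (hsep : SepAmalgam L univ ω) (hD : (univ : Set M).Definable L D)
    (hpos : 0 < ω.toFun (cyl Sum.inr D))
    (hlam : ∀ S, A.Definable L S →
      ω.toFun (S ∩ cyl Sum.inr D) = ω.toFun (cyl Sum.inr D) * lam.toFun S) :
    ω.cond (cyl Sum.inr D) (definable_cyl _ hD) hpos ∈ amalSpace L A lam mu := by
  have hprod : ∀ X Z, (univ : Set M).Definable L X → (univ : Set M).Definable L Z →
      ω.toFun (prodSet X Z) = mu.toFun X * ω.toFun (cyl Sum.inr Z) := fun X Z hX hZ => by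
    rw [hsep X Z hX hZ, hmarg X hX]
  refine ⟨⟨fun S hS => ?_, fun X hX => ?_⟩, fun X Z hX hZ => ?_⟩
  · change ω.toFun (S ∩ cyl Sum.inr D) / ω.toFun (cyl Sum.inr D) = lam.toFun S
    rw [hlam S hS]
    field_simp
  · change ω.toFun (prodSet X D) / ω.toFun (cyl Sum.inr D) = mu.toFun X
    rw [hprod X D hX hD]
    field_simp
  · change ω.toFun (prodSet X Z ∩ cyl Sum.inr D) / ω.toFun (cyl Sum.inr D) =
      ω.toFun (prodSet X D) / ω.toFun (cyl Sum.inr D) *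
        (ω.toFun (cyl Sum.inr (Z ∩ D)) / ω.toFun (cyl Sum.inr D))
    rw [show prodSet X Z ∩ cyl Sum.inr D = prodSet X (Z ∩ D) from inter_assoc _ _ _,
      hprod X _ hX (hZ.inter hD), hprod X D hX hD]
    field_simp

lemma toFun_cylinr_inter_eq_mul {nu : KeislerMeasure L M (univ : Set M) β}
    (huniq : ∀ ω ∈ amalSpace L A lam mu, ∀ Y, (univ : Set M).Definable L Y →
      ω.toFun (cyl Sum.inr Y) = nu.toFun Y)
    (hmarg : ∀ X, (univ : Set M).Definable L X → ω.toFun (cyl Sum.inl X) = mu.toFun X)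
    (hsep : SepAmalgam L univ ω) (hD : (univ : Set M).Definable L D) {r : ℝ} (hr : 0 ≤ r)
    (hlam : ∀ S, A.Definable L S → ω.toFun (S ∩ cyl Sum.inr D) = r * lam.toFun S)
    {Y : Set (β → M)} (hY : (univ : Set M).Definable L Y) :
    ω.toFun (cyl Sum.inr Y ∩ cyl Sum.inr D) = r * nu.toFun Y := by
  obtain rfl : ω.toFun (cyl Sum.inr D) = r := by
    simpa only [univ_inter, lam.measure_univ, mul_one] using hlam univ definable_univ
  rcases hr.eq_or_lt with h0 | hpos
  · rw [← h0, zero_mul]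
    exact ω.toFun_inter_of_toFun_eq_zero (definable_cyl _ hY) (definable_cyl _ hD) h0.symm
  · rw [← huniq _ (cond_cylinr_mem_amalSpace hmarg hsep hD hpos hlam) Y hY]
    change _ = _ * (_ / _)
    field_simp

end Amalgam

theorem AmalDecipherOver.of_separating {A B : Set M} {α β : Type*}
    {mu : KeislerMeasure L M (univ : Set M) α} {nu₁ nu₂ nu₃ : KeislerMeasure L M (univ : Set M) β}
    (h₁ : AmalDecipherOver L A mu nu₁) (h₂ : AmalDecipherOver L A mu nu₂) (hAB : A ⊆ B)
    {D : Set (β → M)} (hD : B.Definable L D) (hD₁ : nu₁.toFun D = 1) (hD₂ : nu₂.toFun D = 0)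
    {r s : ℝ} (hr : 0 ≤ r) (hs : 0 ≤ s) (hrs : r + s = 1)
    (hnu₃ : ∀ Y, (univ : Set M).Definable L Y →
      nu₃.toFun Y = r * nu₁.toFun Y + s * nu₂.toFun Y) :
    AmalDecipherOver L B mu nu₃ := by
  obtain ⟨lam₁, -, ⟨ω₁, ⟨hlam₁, hmarg₁⟩, hsep₁⟩, huniq₁⟩ := h₁
  obtain ⟨lam₂, -, ⟨ω₂, ⟨hlam₂, hmarg₂⟩, hsep₂⟩, huniq₂⟩ := h₂
  have hDu := hD.mono (subset_univ B)
  have hω₁ := huniq₁ ω₁ ⟨⟨hlam₁, hmarg₁⟩, hsep₁⟩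
  have hω₂ := huniq₂ ω₂ ⟨⟨hlam₂, hmarg₂⟩, hsep₂⟩
  set ω := ω₁.comb r s hr hs hrs ω₂
  have hmarg : ∀ X, (univ : Set M).Definable L X → ω.toFun (cyl Sum.inl X) = mu.toFun X :=
    fun X hX => by
      change r * _ + s * _ = _
      rw [hmarg₁ X hX, hmarg₂ X hX]
      linear_combination mu.toFun X * hrs
  refine ⟨ω.restrict (subset_univ B), fun X hX => hmarg X (hX.mono (subset_univ B)),
    ⟨ω, ⟨fun _ _ => rfl, hmarg⟩,
      hsep₁.comb hsep₂ (fun X hX => (hmarg₁ X hX).trans (hmarg₂ X hX).symm) hr hs hrs⟩, ?_⟩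
  rintro ω' ⟨⟨hω', hmarg'⟩, hsep'⟩ Y hY
  have on_D : ω'.toFun (cyl Sum.inr Y ∩ cyl Sum.inr D) = r * nu₁.toFun Y :=
    toFun_cylinr_inter_eq_mul huniq₁ hmarg' hsep' hDu hr (fun S hS => by
      rw [ω'.toFun_inter_eq_mul_of_eq_comb hω' (definable_cyl _ hD)
        (by rw [hω₁ D hDu, hD₁]) (by rw [hω₂ D hDu, hD₂]) (hS.mono hAB), hlam₁ S hS]) hY
  have on_Dc : ω'.toFun (cyl Sum.inr Y ∩ cyl Sum.inr Dᶜ) = s * nu₂.toFun Y :=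
    toFun_cylinr_inter_eq_mul huniq₂ hmarg' hsep' hDu.compl hs (fun S hS => by
      rw [ω'.toFun_inter_eq_mul_of_eq_comb (fun S hS => (hω' S hS).trans (add_comm _ _))
        (definable_cyl _ hD.compl) (by rw [hω₂ _ hDu.compl, nu₂.compl' D hDu, hD₂, sub_zero])
        (by rw [hω₁ _ hDu.compl, nu₁.compl' D hDu, hD₁, sub_self]) (hS.mono hAB),
        hlam₂ S hS]) hY
  rw [hnu₃ Y hY, ← on_D, ← on_Dc, inter_comm, inter_comm (cyl Sum.inr Y)]
  exact (ω'.toFun_inter_add_compl_inter (definable_cyl _ hDu) (definable_cyl _ hY)).symm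

end

/-- If `μ ▶_A ν₁`, `μ ▶_A ν₂` and `supp(ν₁) ∩ supp(ν₂) = ∅`, then there is a finite
tuple `b` from `M` such that `μ ▶_{A∪b} (rν₁ + sν₂)` for all `r, s ∈ [0,1]` with
`r + s = 1`. -/
theorem amalDecipher_convex_combination {L : FirstOrder.Language} {M : Type*}
    [L.Structure M] (A : Set M) {α β : Type*}
    (mu : KeislerMeasure L M (Set.univ : Set M) α)
    (nu₁ nu₂ : KeislerMeasure L M (Set.univ : Set M) β)
    (hsupp : ¬ ∃ p : CompleteType L M (Set.univ : Set M) β,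
      InSupport L p nu₁ ∧ InSupport L p nu₂)
    (h₁ : AmalDecipherOver L A mu nu₁) (h₂ : AmalDecipherOver L A mu nu₂) :
    ∃ (n : ℕ) (b : Fin n → M), ∀ r s : ℝ, 0 ≤ r → 0 ≤ s → r + s = 1 →
      ∀ nu₃ : KeislerMeasure L M (Set.univ : Set M) β,
        (∀ Y : Set (β → M), (Set.univ : Set M).Definable L Y →
          nu₃.toFun Y = r * nu₁.toFun Y + s * nu₂.toFun Y) →
        AmalDecipherOver L (A ∪ Set.range b) mu nu₃ := by
  obtain ⟨D, hD, hD₁, hD₂⟩ := exists_definable_separating hsupp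
  obtain ⟨n, b, hDb⟩ := hD.exists_fin_range
  exact ⟨n, b, fun r s hr hs hrs _ hnu₃ => h₁.of_separating h₂ subset_union_left
    (hDb.mono subset_union_right) hD₁ hD₂ hr hs hrs hnu₃⟩
end
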